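/- arXiv:2505.09146 — 2 statements merged into one kernel-verified Lean document; each statement's English description precedes it below -/
import Mathlib

section
/- Let f, g : ℝ^d → ℝ be differentiable, G-Lipschitz, and L-smooth, let ε > 0, β > 0, and define σ_β(x) = min{1, max{0, 1 + βx}} and F(w) = σ_β(g(w) − ε)∇g(w) + (1 − σ_β(g(w) − ε))∇f(w). Then F is Lipschitz with constant at most 2(L + G²β). -/
/-!
Write `s = σ_β(g x - ε)` and `t = σ_β(g y - ε)`. Then
`F x - F y = s (∇g x - ∇g y) + (1 - s) (∇f x - ∇f y) + (s - t) (∇g y - ∇f y)`.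
Since `s ∈ [0, 1]`, the first two terms together are at most `L ‖x - y‖`. The hinge is
`β`-Lipschitz and `g` is `G`-Lipschitz, so `|s - t| ≤ β G ‖x - y‖`, while `‖∇g y - ∇f y‖ ≤ 2G`.
This gives the sharper constant `L + 2 G² β`.
-/

/-- The trimmed hinge `σ_β`. -/
def trimmedHinge (β x : ℝ) : ℝ := min 1 (max 0 (1 + β * x))

lemma trimmedHinge_nonneg (β x : ℝ) : 0 ≤ trimmedHinge β x :=
  le_min zero_le_one (le_max_left _ _)

lemma trimmedHinge_le_one (β x : ℝ) : trimmedHinge β x ≤ 1 :=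
  min_le_left _ _

lemma abs_trimmedHinge_sub_le {β : ℝ} (hβ : 0 ≤ β) (a b : ℝ) :
    |trimmedHinge β a - trimmedHinge β b| ≤ β * |a - b| :=
  calc |min 1 (max 0 (1 + β * a)) - min 1 (max 0 (1 + β * b))|
      ≤ |max 0 (1 + β * a) - max 0 (1 + β * b)| := by
        simpa using abs_min_sub_min_le_max 1 (max 0 (1 + β * a)) 1 (max 0 (1 + β * b))
    _ ≤ |(1 + β * a) - (1 + β * b)| := by
        simpa using abs_max_sub_max_le_max 0 (1 + β * a) 0 (1 + β * b)
    _ = β * |a - b| := by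
        rw [show (1 + β * a) - (1 + β * b) = β * (a - b) by ring, abs_mul, abs_of_nonneg hβ]

lemma abs_sub_le_of_hasGradientAt_of_norm_le {F : Type*} [NormedAddCommGroup F]
    [InnerProductSpace ℝ F] [CompleteSpace F] {f : F → ℝ} {f' : F → F} {C : ℝ}
    (hf : ∀ x, HasGradientAt f (f' x) x) (hC : ∀ x, ‖f' x‖ ≤ C) (x y : F) :
    |f x - f y| ≤ C * ‖x - y‖ := by
  simpa [Real.norm_eq_abs] using convex_univ.norm_image_sub_le_of_norm_hasFDerivWithin_le
    (fun w _ => (hf w).hasFDerivAt.hasFDerivWithinAt) (fun w _ => by simpa using hC w)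
    (Set.mem_univ y) (Set.mem_univ x)

/-- Moving both the endpoints and the weight of a convex combination: the weight change `s - t`
is paid for by the distance `‖u' - v'‖` between the new endpoints. -/
lemma norm_convexCombo_sub_convexCombo_le {E : Type*} [NormedAddCommGroup E] [NormedSpace ℝ E]
    {s t M : ℝ} {u u' v v' : E} (hs₀ : 0 ≤ s) (hs₁ : s ≤ 1)
    (hu : ‖u - u'‖ ≤ M) (hv : ‖v - v'‖ ≤ M) :
    ‖(s • u + (1 - s) • v) - (t • u' + (1 - t) • v')‖ ≤ M + |s - t| * ‖u' - v'‖ := by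
  have hs₁' : 0 ≤ 1 - s := sub_nonneg.mpr hs₁
  have decomp : (s • u + (1 - s) • v) - (t • u' + (1 - t) • v')
      = s • (u - u') + (1 - s) • (v - v') + (s - t) • (u' - v') := by module
  calc ‖(s • u + (1 - s) • v) - (t • u' + (1 - t) • v')‖
      ≤ s * ‖u - u'‖ + (1 - s) * ‖v - v'‖ + |s - t| * ‖u' - v'‖ := by
        rw [decomp]
        refine (norm_add₃_le ..).trans_eq ?_
        rw [norm_smul, norm_smul, norm_smul, Real.norm_eq_abs, Real.norm_eq_abs,
          Real.norm_eq_abs, abs_of_nonneg hs₀, abs_of_nonneg hs₁']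
    _ ≤ s * M + (1 - s) * M + |s - t| * ‖u' - v'‖ := by gcongr
    _ = M + |s - t| * ‖u' - v'‖ := by ring

theorem soft_switching_field_lipschitz_general (d : ℕ)
    (g : EuclideanSpace ℝ (Fin d) → ℝ)
    (f' g' : EuclideanSpace ℝ (Fin d) → EuclideanSpace ℝ (Fin d))
    (hg : ∀ x, HasGradientAt g (g' x) x)
    (G L ε β : ℝ) (hβ : 0 < β)
    (hfG : ∀ x, ‖f' x‖ ≤ G) (hgG : ∀ x, ‖g' x‖ ≤ G)
    (hfL : ∀ x y, ‖f' x - f' y‖ ≤ L * ‖x - y‖)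
    (hgL : ∀ x y, ‖g' x - g' y‖ ≤ L * ‖x - y‖)
    (σ : ℝ → ℝ) (hσ : σ = fun x => min 1 (max 0 (1 + β * x)))
    (F : EuclideanSpace ℝ (Fin d) → EuclideanSpace ℝ (Fin d))
    (hF : F = fun w => σ (g w - ε) • g' w + (1 - σ (g w - ε)) • f' w) :
    ∀ x y, ‖F x - F y‖ ≤ 2 * (L + G ^ 2 * β) * ‖x - y‖ := by
  change σ = trimmedHinge β at hσ
  subst hσ hF
  intro x y
  have hweight : |trimmedHinge β (g x - ε) - trimmedHinge β (g y - ε)| ≤ β * G * ‖x - y‖ :=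
    calc _ ≤ β * |(g x - ε) - (g y - ε)| := abs_trimmedHinge_sub_le hβ.le _ _
      _ = β * |g x - g y| := by rw [sub_sub_sub_cancel_right]
      _ ≤ β * (G * ‖x - y‖) := by
          gcongr; exact abs_sub_le_of_hasGradientAt_of_norm_le hg hgG x y
      _ = β * G * ‖x - y‖ := by ring
  have hgap : ‖g' y - f' y‖ ≤ 2 * G := (norm_sub_le _ _).trans (by linarith [hgG y, hfG y])
  have hLxy : 0 ≤ L * ‖x - y‖ := (norm_nonneg _).trans (hfL x y)
  have hG : 0 ≤ G := (norm_nonneg _).trans (hgG x)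
  calc _ ≤ L * ‖x - y‖ + β * G * ‖x - y‖ * (2 * G) :=
        (norm_convexCombo_sub_convexCombo_le (trimmedHinge_nonneg _ _) (trimmedHinge_le_one _ _)
          (hgL x y) (hfL x y)).trans (by gcongr)
    _ ≤ 2 * (L + G ^ 2 * β) * ‖x - y‖ := by nlinarith

theorem soft_switching_field_lipschitz (d : ℕ)
    (f g : EuclideanSpace ℝ (Fin d) → ℝ)
    (f' g' : EuclideanSpace ℝ (Fin d) → EuclideanSpace ℝ (Fin d))
    (hf : ∀ x, HasGradientAt f (f' x) x)
    (hg : ∀ x, HasGradientAt g (g' x) x)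
    (G L ε β : ℝ) (hG : 0 ≤ G) (hL : 0 ≤ L) (hε : 0 < ε) (hβ : 0 < β)
    (hfG : ∀ x, ‖f' x‖ ≤ G) (hgG : ∀ x, ‖g' x‖ ≤ G)
    (hfL : ∀ x y, ‖f' x - f' y‖ ≤ L * ‖x - y‖)
    (hgL : ∀ x y, ‖g' x - g' y‖ ≤ L * ‖x - y‖)
    (σ : ℝ → ℝ) (hσ : σ = fun x => min 1 (max 0 (1 + β * x)))
    (F : EuclideanSpace ℝ (Fin d) → EuclideanSpace ℝ (Fin d))
    (hF : F = fun w => σ (g w - ε) • g' w + (1 - σ (g w - ε)) • f' w) :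
    ∀ x y, ‖F x - F y‖ ≤ 2 * (L + G ^ 2 * β) * ‖x - y‖ :=
  soft_switching_field_lipschitz_general d g f' g' hg G L ε β hβ hfG hgG hfL hgL σ hσ F hF
end

section
/- Let f, g : ℝ^d → ℝ be convex, differentiable, G-Lipschitz functions, w* a minimizer of f subject to g(w) ≤ 0 with g(w*) ≤ 0, D = ‖w_1 − w*‖. Run the Switching Gradient Method w_{t+1} = w_t − η u_t, where u_t = ∇f(w_t) if g(w_t) ≤ ε else u_t = ∇g(w_t), with ε = DG/√T and η = D/(G√T). Then the set A = {t ∈ [T] : g(w_t) ≤ ε} is nonempty, and w̄ := (1/|A|) Σ_{t∈A} w_t satisfies f(w̄) − f(w*) ≤ ε and g(w̄) ≤ ε. -/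
open RealInnerProductSpace Finset
open scoped Classical

/-!
Gradient steps of size `η = D / (G √T)` have regret `∑ₜ ⟪uₜ, wₜ - w*⟫ ≤ D G √T = T ε`. A step
with `g wₜ > ε` moves along `∇g`, and by convexity `⟪∇g wₜ, wₜ - w*⟫ ≥ g wₜ - g w* > ε`, so such a
step contributes more than `ε` to the regret. Hence the set `A` of `ε`-feasible steps is nonempty,
and since each of them moves along `∇f`, with `⟪∇f wₜ, wₜ - w*⟫ ≥ f wₜ - f w*`, their optimality
gaps sum to at most `|A| ε`. Jensen's inequality for the average over `A` concludes.
-/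

/-- Along the segment from `x` to `y` this is the slope inequality for convex functions of one
real variable. -/
theorem ConvexOn.sub_le_inner_of_hasGradientAt {E : Type*} [NormedAddCommGroup E]
    [InnerProductSpace ℝ E] [CompleteSpace E] {s : Set E} {f : E → ℝ} {p x y : E}
    (hconv : ConvexOn ℝ s f) (hx : x ∈ s) (hy : y ∈ s) (hf : HasGradientAt f p x) :
    f x - f y ≤ ⟪p, x - y⟫ := by
  set φ := f ∘ AffineMap.lineMap (k := ℝ) x y
  have hφ : ConvexOn ℝ (AffineMap.lineMap x y ⁻¹' s) φ := hconv.comp_affineMap _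
  have hline : HasDerivAt (fun t : ℝ => AffineMap.lineMap x y t) (y - x) 0 := by
    simpa [AffineMap.lineMap_apply_module'] using
      ((hasDerivAt_id (0 : ℝ)).smul_const (y - x)).add_const x
  have hderiv : HasDerivAt φ ⟪p, y - x⟫ 0 := by
    have hf0 : HasFDerivAt f (InnerProductSpace.toDual ℝ E p)
        (AffineMap.lineMap x y (0 : ℝ)) := by
      simpa using hf.hasFDerivAt
    simpa using hf0.comp_hasDerivAt (0 : ℝ) hline
  have hslope := hφ.le_slope_of_hasDerivAt (by simpa using hx) (by simpa using hy) one_pos hderiv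
  have hsub : ⟪p, y - x⟫ = -⟪p, x - y⟫ := by rw [← inner_neg_right, neg_sub]
  simp only [slope, φ, Function.comp_apply, AffineMap.lineMap_apply_zero,
    AffineMap.lineMap_apply_one, sub_zero, inv_one, one_smul, vsub_eq_sub] at hslope
  linarith

theorem ConvexOn.map_average_le_of_sum_le {E ι : Type*} [AddCommGroup E] [Module ℝ E]
    {C : Set E} {f : E → ℝ} (hf : ConvexOn ℝ C f) {s : Finset ι} (hs : s.Nonempty)
    {x : ι → E} (hx : ∀ i ∈ s, x i ∈ C) {c : ℝ} (hsum : ∑ i ∈ s, f (x i) ≤ #s * c) :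
    f ((#s : ℝ)⁻¹ • ∑ i ∈ s, x i) ≤ c := by
  have hcard : (0 : ℝ) < #s := by exact_mod_cast hs.card_pos
  have hweights : ∑ _i ∈ s, (#s : ℝ)⁻¹ = 1 := by
    rw [sum_const, nsmul_eq_mul, mul_inv_cancel₀ hcard.ne']
  calc f ((#s : ℝ)⁻¹ • ∑ i ∈ s, x i)
      = f (∑ i ∈ s, (#s : ℝ)⁻¹ • x i) := by rw [smul_sum]
    _ ≤ ∑ i ∈ s, (#s : ℝ)⁻¹ • f (x i) :=
      hf.map_sum_le (fun _ _ => inv_nonneg.2 hcard.le) hweights hx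
    _ = (#s : ℝ)⁻¹ * ∑ i ∈ s, f (x i) := by simp only [smul_eq_mul, mul_sum]
    _ ≤ (#s : ℝ)⁻¹ * (#s * c) := by gcongr
    _ = c := by field_simp

section GradientStep

variable {E : Type*} [NormedAddCommGroup E] [InnerProductSpace ℝ E]

theorem norm_sub_smul_sub_sq (x v z : E) (η : ℝ) :
    ‖x - η • v - z‖ ^ 2 = ‖x - z‖ ^ 2 - 2 * η * ⟪v, x - z⟫ + η ^ 2 * ‖v‖ ^ 2 := by
  rw [sub_right_comm, norm_sub_sq_real, real_inner_smul_right, norm_smul, real_inner_comm,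
    Real.norm_eq_abs, mul_pow, sq_abs]
  ring

variable {w u : ℕ → E} {η G : ℝ}

theorem gradient_step_sum_inner_add_sq_le (huG : ∀ t, ‖u t‖ ≤ G)
    (hupd : ∀ t, w (t + 1) = w t - η • u t) (z : E) (n : ℕ) :
    2 * η * ∑ t ∈ Icc 1 n, ⟪u t, w t - z⟫ + ‖w (n + 1) - z‖ ^ 2 ≤
      ‖w 1 - z‖ ^ 2 + n * (η ^ 2 * G ^ 2) := by
  induction n with
  | zero => simp
  | succ n ih =>
    have hstep := norm_sub_smul_sub_sq (w (n + 1)) (u (n + 1)) z η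
    have huG : ‖u (n + 1)‖ ^ 2 ≤ G ^ 2 := pow_le_pow_left₀ (norm_nonneg _) (huG _) 2
    rw [sum_Icc_succ_top (by omega), hupd (n + 1), hstep]
    push_cast
    nlinarith [sq_nonneg η]

theorem gradient_step_sum_inner_le (hG : 0 < G) (huG : ∀ t, ‖u t‖ ≤ G)
    (hupd : ∀ t, w (t + 1) = w t - η • u t) (z : E) {T : ℕ} (hT : 0 < T)
    (hη : η = ‖w 1 - z‖ / (G * √T)) :
    ∑ t ∈ Icc 1 T, ⟪u t, w t - z⟫ ≤ ‖w 1 - z‖ * G * √T := by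
  rcases (norm_nonneg (w 1 - z)).eq_or_lt with hD | hD
  · have hconst : ∀ t, w t = w 0 := by
      intro t
      induction t with
      | zero => rfl
      | succ t ih => rw [hupd, hη, ← hD, zero_div, zero_smul, sub_zero, ih]
    have hz : z = w 0 := by rw [← hconst 1, eq_comm, ← sub_eq_zero, ← norm_eq_zero, hD]
    simp [hconst, hz]
  · set D := ‖w 1 - z‖
    have hηpos : 0 < η := by rw [hη]; positivity
    have hηG : T * (η ^ 2 * G ^ 2) = D ^ 2 := by
      rw [hη, div_pow, mul_pow, Real.sq_sqrt (Nat.cast_nonneg T)]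
      field_simp
    have hηD : 2 * η * (D * G * √T) = 2 * D ^ 2 := by
      rw [hη]
      field_simp
    have hdesc := gradient_step_sum_inner_add_sq_le huG hupd z T
    have hsum : 2 * η * ∑ t ∈ Icc 1 T, ⟪u t, w t - z⟫ ≤ 2 * η * (D * G * √T) := by
      nlinarith [sq_nonneg ‖w (T + 1) - z‖]
    exact le_of_mul_le_mul_left hsum (by positivity)

end GradientStep

section Switching

variable {E : Type*} [NormedAddCommGroup E] [InnerProductSpace ℝ E] [CompleteSpace E]
  {f g : E → ℝ} {f' g' : E → E} {w u : ℕ → E} {z : E} {ε : ℝ}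

theorem switching_filter_nonempty_and_sum_le
    (hfconv : ConvexOn ℝ Set.univ f) (hgconv : ConvexOn ℝ Set.univ g)
    (hf : ∀ x, HasGradientAt f (f' x) x) (hg : ∀ x, HasGradientAt g (g' x) x)
    (hz : g z ≤ 0) (hu : ∀ t, u t = if g (w t) ≤ ε then f' (w t) else g' (w t))
    {S : Finset ℕ} (hS : S.Nonempty) (hregret : ∑ t ∈ S, ⟪u t, w t - z⟫ ≤ #S * ε) :
    {t ∈ S | g (w t) ≤ ε}.Nonempty ∧
      ∑ t ∈ S with g (w t) ≤ ε, f (w t) ≤ #{t ∈ S | g (w t) ≤ ε} * (f z + ε) := by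
  have hfeas : ∀ t, g (w t) ≤ ε → f (w t) - f z ≤ ⟪u t, w t - z⟫ := fun t ht => by
    rw [hu, if_pos ht]
    exact hfconv.sub_le_inner_of_hasGradientAt (Set.mem_univ _) (Set.mem_univ _) (hf _)
  have hinfeas : ∀ t, ¬g (w t) ≤ ε → ε < ⟪u t, w t - z⟫ := fun t ht => by
    rw [hu, if_neg ht]
    linarith [hgconv.sub_le_inner_of_hasGradientAt (Set.mem_univ _) (Set.mem_univ z) (hg (w t))]
  have hsplit := sum_filter_add_sum_filter_not S (fun t => g (w t) ≤ ε) fun t => ⟪u t, w t - z⟫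
  have hcard :
      (#{t ∈ S | g (w t) ≤ ε} : ℝ) * ε + #{t ∈ S | ¬g (w t) ≤ ε} * ε = #S * ε := by
    rw [← add_mul, ← Nat.cast_add, card_filter_add_card_filter_not]
  have hinfeas_sum :
      #{t ∈ S | ¬g (w t) ≤ ε} * ε ≤ ∑ t ∈ S with ¬g (w t) ≤ ε, ⟪u t, w t - z⟫ := by
    simpa using card_nsmul_le_sum _ _ ε fun t ht => (hinfeas t (mem_filter.1 ht).2).le
  refine ⟨?_, ?_⟩
  · by_contra hempty
    rw [not_nonempty_iff_eq_empty, filter_eq_empty_iff] at hempty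
    have hlt : ∑ _t ∈ S, ε < ∑ t ∈ S, ⟪u t, w t - z⟫ :=
      sum_lt_sum_of_nonempty hS fun t ht => hinfeas t (hempty ht)
    rw [sum_const, nsmul_eq_mul] at hlt
    linarith
  · have hfeas_sum : ∑ t ∈ S with g (w t) ≤ ε, (f (w t) - f z) ≤
        ∑ t ∈ S with g (w t) ≤ ε, ⟪u t, w t - z⟫ :=
      sum_le_sum fun t ht => hfeas t (mem_filter.1 ht).2
    rw [sum_sub_distrib, sum_const, nsmul_eq_mul] at hfeas_sum
    linarith [mul_add (#{t ∈ S | g (w t) ≤ ε} : ℝ) (f z) ε]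

end Switching

theorem sgm_nonsmooth_convergence_general (d : ℕ) (T : ℕ) (hT : 1 ≤ T)
    (f g : EuclideanSpace ℝ (Fin d) → ℝ)
    (f' g' : EuclideanSpace ℝ (Fin d) → EuclideanSpace ℝ (Fin d))
    (hfconv : ConvexOn ℝ Set.univ f) (hgconv : ConvexOn ℝ Set.univ g)
    (hf : ∀ x, HasGradientAt f (f' x) x)
    (hg : ∀ x, HasGradientAt g (g' x) x)
    (G : ℝ) (hG : 0 < G)
    (hfG : ∀ x, ‖f' x‖ ≤ G) (hgG : ∀ x, ‖g' x‖ ≤ G)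
    (wstar : EuclideanSpace ℝ (Fin d)) (hws : g wstar ≤ 0)
    (w u : ℕ → EuclideanSpace ℝ (Fin d))
    (D : ℝ) (hD : D = ‖w 1 - wstar‖)
    (ε η : ℝ) (hε : ε = D * G / Real.sqrt T) (hη : η = D / (G * Real.sqrt T))
    (hu : ∀ t, u t = if g (w t) ≤ ε then f' (w t) else g' (w t))
    (hupd : ∀ t, w (t + 1) = w t - η • u t)
    (A : Finset ℕ)
    (hA : A = (Finset.Icc 1 T).filter (fun t => g (w t) ≤ ε))
    (wbar : EuclideanSpace ℝ (Fin d))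
    (hwbar : wbar = (A.card : ℝ)⁻¹ • ∑ t ∈ A, w t) :
    A.Nonempty ∧ f wbar - f wstar ≤ ε ∧ g wbar ≤ ε := by
  have huG : ∀ t, ‖u t‖ ≤ G := fun t => by rw [hu]; split_ifs <;> simp [hfG, hgG]
  have hTε : (T : ℝ) * ε = D * G * √T := by
    rw [hε, mul_div_assoc', mul_comm, mul_div_assoc, Real.div_sqrt]
  have hregret : ∑ t ∈ Icc 1 T, ⟪u t, w t - wstar⟫ ≤ #(Icc 1 T) * ε := by
    rw [Nat.card_Icc, Nat.add_sub_cancel, hTε, hD]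
    exact gradient_step_sum_inner_le hG huG hupd wstar hT (hD ▸ hη)
  obtain ⟨hne, hfsum⟩ := switching_filter_nonempty_and_sum_le hfconv hgconv hf hg hws hu
    ⟨1, mem_Icc.2 ⟨le_rfl, hT⟩⟩ hregret
  rw [← hA] at hne hfsum
  have hgsum : ∑ t ∈ A, g (w t) ≤ #A * ε := by
    simpa using sum_le_card_nsmul A _ ε fun t ht => by rw [hA] at ht; exact (mem_filter.1 ht).2
  rw [hwbar]
  refine ⟨hne, ?_, hgconv.map_average_le_of_sum_le hne (fun _ _ => Set.mem_univ _) hgsum⟩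
  linarith [hfconv.map_average_le_of_sum_le hne (fun _ _ => Set.mem_univ _) hfsum]

theorem sgm_nonsmooth_convergence (d : ℕ) (T : ℕ) (hT : 1 ≤ T)
    (f g : EuclideanSpace ℝ (Fin d) → ℝ)
    (f' g' : EuclideanSpace ℝ (Fin d) → EuclideanSpace ℝ (Fin d))
    (hfconv : ConvexOn ℝ Set.univ f) (hgconv : ConvexOn ℝ Set.univ g)
    (hf : ∀ x, HasGradientAt f (f' x) x)
    (hg : ∀ x, HasGradientAt g (g' x) x)
    (G : ℝ) (hG : 0 < G)
    (hfG : ∀ x, ‖f' x‖ ≤ G) (hgG : ∀ x, ‖g' x‖ ≤ G)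
    (wstar : EuclideanSpace ℝ (Fin d)) (hws : g wstar ≤ 0)
    (hmin : ∀ x, g x ≤ 0 → f wstar ≤ f x)
    (w u : ℕ → EuclideanSpace ℝ (Fin d))
    (D : ℝ) (hD : D = ‖w 1 - wstar‖)
    (ε η : ℝ) (hε : ε = D * G / Real.sqrt T) (hη : η = D / (G * Real.sqrt T))
    (hu : ∀ t, u t = if g (w t) ≤ ε then f' (w t) else g' (w t))
    (hupd : ∀ t, w (t + 1) = w t - η • u t)
    (A : Finset ℕ)
    (hA : A = (Finset.Icc 1 T).filter (fun t => g (w t) ≤ ε))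
    (wbar : EuclideanSpace ℝ (Fin d))
    (hwbar : wbar = (A.card : ℝ)⁻¹ • ∑ t ∈ A, w t) :
    A.Nonempty ∧ f wbar - f wstar ≤ ε ∧ g wbar ≤ ε :=
  sgm_nonsmooth_convergence_general d T hT f g f' g' hfconv hgconv hf hg G hG hfG hgG wstar hws w u
    D hD ε η hε hη hu hupd A hA wbar hwbar
end
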